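/- arXiv:2001.05546 — 3 statements merged into one kernel-verified Lean document; each statement's English description precedes it below -/
import Mathlib

section
/- Define f(n,k) = Σ_{j∈ℤ} (−1)^j q^{j(3j−1)/2} [n choose k−j]_q [n choose k+j]_q. Then for all n ≥ 1 and all k, f(n,k) = f(n−1,k) + q^{n−k} f(n−1,k−1). -/
open LaurentPolynomial

/-- The Gaussian (q-)binomial coefficient `[n choose k]_q`, as a Laurent polynomial in `q`,
with the convention that it vanishes for `k < 0` or `k > n`.  Defined via the standard
Pascal-type recurrence `[n+1, k] = q^k [n, k] + [n, k-1]`. -/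
noncomputable def qb : ℕ → ℤ → LaurentPolynomial ℤ
  | 0, k => if k = 0 then 1 else 0
  | (n+1), k => T k * qb n k + qb n (k-1)

/-- The variable `q`. -/
noncomputable def q : LaurentPolynomial ℤ := T 1

/-- `f n k = Σ_{j∈ℤ} (−1)^j q^{j(3j−1)/2} [n choose k−j]_q [n choose k+j]_q`. -/
noncomputable def f (n : ℕ) (k : ℤ) : LaurentPolynomial ℤ :=
  ∑ᶠ j : ℤ, (-1 : LaurentPolynomial ℤ) ^ j.natAbs * T (j * (3 * j - 1) / 2) *
    qb n (k - j) * qb n (k + j)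


/-!
Write `S_{m,n}(a, b, c) = Σ_j (-1)^j q^{j(3j-1)/2 + cj} [m, a-j]_q [n, b+j]_q`, so that
`f(n, k) = S_{n,n}(k, k, 0)`. Each of the two q-Pascal rules lowers one level of `S` by shifting
`a` or `b` together with `c`. The substitution `j ↦ -j` gives `S_{m,n}(a, b, c) = S_{n,m}(b, a, 1-c)`,
and `j ↦ 1-j` negates every term of `S_{m,m}(a, a-1, -1)`, which therefore vanishes. Expanding
`f(m+1, k)` leaves `f(m, k)`, `q^{2(m+1-k)} f(m, k-1)` and `q^{m+1-k} S_{m,m}(k, k-1, 0)`, and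
comparing the two Pascal expansions of `S_{m+1,m}(k, k-1, 0)` gives
`S_{m,m}(k, k-1, 0) = (1 - q^{m+1-k}) f(m, k-1)`.
-/

instance {R : Type*} [Semiring R] [CharZero R] : CharZero R[T;T⁻¹] :=
  charZero_of_injective_ringHom Polynomial.toLaurent_injective

theorem finsum_add_mul {α R : Type*} [Semiring R] [NoZeroDivisors R] {f g : α → R}
    (hf : f.HasFiniteSupport) (hg : g.HasFiniteSupport) (r : R) :
    ∑ᶠ i, (f i + r * g i) = ∑ᶠ i, f i + r * ∑ᶠ i, g i := by
  have hrg : (fun i ↦ r * g i).HasFiniteSupport := hg.mul_right fun _ ↦ r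
  rw [finsum_add_distrib hf hrg, mul_finsum]

theorem neg_one_pow_natAbs_one_sub {R : Type*} [Ring R] (j : ℤ) :
    (-1 : R) ^ (1 - j).natAbs = -(-1) ^ j.natAbs := by
  rcases Int.even_or_odd j with h | h
  · rw [(Int.natAbs_odd.2 (by grind)).neg_one_pow, (Int.natAbs_even.2 h).neg_one_pow]
  · rw [(Int.natAbs_even.2 (by grind)).neg_one_pow, (Int.natAbs_odd.2 h).neg_one_pow, neg_neg]

theorem natCast_pentagonal_neg (k : ℤ) : (pentagonal (-k) : ℤ) = pentagonal k + k := by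
  grind [two_mul_natCast_pentagonal]

theorem natCast_pentagonal_one_sub (k : ℤ) :
    (pentagonal (1 - k) : ℤ) = pentagonal k + 1 - 2 * k := by
  grind [two_mul_natCast_pentagonal]

theorem qb_succ (n : ℕ) (k : ℤ) : qb (n + 1) k = T k * qb n k + qb n (k - 1) := rfl

theorem support_qb_subset (n : ℕ) : Function.support (qb n) ⊆ Set.Icc 0 n := by
  induction n with
  | zero => intro k hk; simp_all [qb]
  | succ n ih =>
    intro k hk
    have : k ∈ Function.support (qb n) ∨ k - 1 ∈ Function.support (qb n) := by
      by_contra! h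
      simp_all [qb_succ]
    rcases this with h | h <;> have := ih h <;> simp only [Set.mem_Icc] at this ⊢ <;> omega

theorem qb_succ' (n : ℕ) (k : ℤ) : qb (n + 1) k = qb n k + T (n + 1 - k) * qb n (k - 1) := by
  induction n generalizing k with
  | zero =>
    by_cases h₀ : k = 0
    · simp [qb, h₀]
    by_cases h₁ : k = 1
    · simp [qb, h₁]
    · simp [qb, h₀, h₁, sub_eq_zero]
  | succ n ih =>
    have hT : (T k * T (n + 1 - k) : ℤ[T;T⁻¹]) = T (n + 1 + 1 - k) * T (k - 1) := by
      rw [← T_add, ← T_add]; ring_nf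
    have h := ih (k - 1)
    rw [show (n : ℤ) + 1 - (k - 1) = n + 1 + 1 - k by ring] at h
    rw [qb_succ (n + 1) k]
    push_cast
    linear_combination T k * ih k + h - qb_succ n k - T (n + 1 + 1 - k) * qb_succ n (k - 1) +
      qb n (k - 1) * hT

noncomputable def pentagonalTerm (m n : ℕ) (a b c j : ℤ) : ℤ[T;T⁻¹] :=
  (-1) ^ j.natAbs * T (pentagonal j + c * j) * qb m (a - j) * qb n (b + j)

noncomputable def pentagonalSum (m n : ℕ) (a b c : ℤ) : ℤ[T;T⁻¹] :=
  ∑ᶠ j, pentagonalTerm m n a b c j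

theorem f_eq_pentagonalSum (n : ℕ) (k : ℤ) : f n k = pentagonalSum n n k k 0 := by
  simp [f, pentagonalSum, pentagonalTerm, natCast_pentagonal]

theorem hasFiniteSupport_pentagonalTerm (m n : ℕ) (a b c : ℤ) :
    (pentagonalTerm m n a b c).HasFiniteSupport := by
  refine ((Set.finite_Icc 0 (m : ℤ)).preimage (sub_right_injective (b := a)).injOn).subset ?_
  intro j hj
  refine support_qb_subset m (fun h ↦ hj ?_)
  simp [pentagonalTerm, h]

theorem pentagonalSum_succ_left (m n : ℕ) (a b c : ℤ) :
    pentagonalSum (m + 1) n a b c =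
      T a * pentagonalSum m n a b (c - 1) + pentagonalSum m n (a - 1) b c := by
  rw [pentagonalSum, pentagonalSum, pentagonalSum, add_comm (T a * _),
    ← finsum_add_mul (hasFiniteSupport_pentagonalTerm ..) (hasFiniteSupport_pentagonalTerm ..)]
  refine finsum_congr fun j ↦ ?_
  have hT : (T (pentagonal j + c * j) * T (a - j) : ℤ[T;T⁻¹]) =
      T a * T (pentagonal j + (c - 1) * j) := by
    rw [← T_add, ← T_add]; ring_nf
  simp only [pentagonalTerm, qb_succ, show a - j - 1 = a - 1 - j by ring]
  linear_combination (-1) ^ j.natAbs * qb m (a - j) * qb n (b + j) * hT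

theorem pentagonalSum_succ_left' (m n : ℕ) (a b c : ℤ) :
    pentagonalSum (m + 1) n a b c =
      pentagonalSum m n a b c + T (m + 1 - a) * pentagonalSum m n (a - 1) b (c + 1) := by
  rw [pentagonalSum, pentagonalSum, pentagonalSum,
    ← finsum_add_mul (hasFiniteSupport_pentagonalTerm ..) (hasFiniteSupport_pentagonalTerm ..)]
  refine finsum_congr fun j ↦ ?_
  have hT : (T (pentagonal j + c * j) * T (m + 1 - (a - j)) : ℤ[T;T⁻¹]) =
      T (m + 1 - a) * T (pentagonal j + (c + 1) * j) := by
    rw [← T_add, ← T_add]; ring_nf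
  simp only [pentagonalTerm, qb_succ', show a - j - 1 = a - 1 - j by ring]
  linear_combination (-1) ^ j.natAbs * qb m (a - 1 - j) * qb n (b + j) * hT

theorem pentagonalSum_comm (m n : ℕ) (a b c : ℤ) :
    pentagonalSum m n a b c = pentagonalSum n m b a (1 - c) := by
  rw [pentagonalSum, pentagonalSum, ← finsum_comp_equiv (Equiv.neg ℤ)]
  refine finsum_congr fun j ↦ ?_
  simp only [pentagonalTerm, Equiv.neg_apply, Int.natAbs_neg, natCast_pentagonal_neg,
    sub_neg_eq_add, ← sub_eq_add_neg]
  rw [show (pentagonal j : ℤ) + j + c * -j = pentagonal j + (1 - c) * j by ring]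
  ring

theorem pentagonalSum_eq_zero (m : ℕ) (a : ℤ) : pentagonalSum m m a (a - 1) (-1) = 0 := by
  refine self_eq_neg.mp ?_
  conv_lhs => rw [pentagonalSum, ← finsum_comp_equiv (Equiv.subLeft 1)]
  rw [pentagonalSum, ← finsum_neg_distrib]
  refine finsum_congr fun j ↦ ?_
  simp only [pentagonalTerm, Equiv.subLeft_apply, neg_one_pow_natAbs_one_sub,
    natCast_pentagonal_one_sub]
  rw [show (pentagonal j : ℤ) + 1 - 2 * j + -1 * (1 - j) = pentagonal j + -1 * j by ring,
    show a - (1 - j) = a - 1 + j by ring, show a - 1 + (1 - j) = a - j by ring]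
  ring

theorem pentagonalSum_succ_right (m n : ℕ) (a b c : ℤ) :
    pentagonalSum m (n + 1) a b c =
      pentagonalSum m n a b c + T (n + 1 - b) * pentagonalSum m n a (b - 1) (c - 1) := by
  rw [pentagonalSum_comm m, pentagonalSum_succ_left', pentagonalSum_comm n m b,
    pentagonalSum_comm n m (b - 1), sub_sub_cancel, show (1 : ℤ) - (1 - c + 1) = c - 1 by ring]

theorem pentagonalSum_sub_one (m : ℕ) (a : ℤ) :
    pentagonalSum m m a (a - 1) 0 = (1 - T (m + 1 - a)) * pentagonalSum m m (a - 1) (a - 1) 0 := by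
  have h := (pentagonalSum_succ_left m m a (a - 1) 0).symm.trans
    (pentagonalSum_succ_left' m m a (a - 1) 0)
  rw [zero_sub, pentagonalSum_eq_zero, zero_add, pentagonalSum_comm m m (a - 1) (a - 1) 1,
    sub_self] at h
  linear_combination -h

theorem f_succ (m : ℕ) (k : ℤ) : f (m + 1) k = f m k + T (m + 1 - k) * f m (k - 1) := by
  have hsymm : pentagonalSum m m (k - 1) k 1 = pentagonalSum m m k (k - 1) 0 := by
    rw [pentagonalSum_comm, sub_self]
  rw [f_eq_pentagonalSum, f_eq_pentagonalSum, f_eq_pentagonalSum, pentagonalSum_succ_left',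
    pentagonalSum_succ_right, pentagonalSum_succ_right, zero_sub, pentagonalSum_eq_zero, zero_add,
    sub_self, hsymm, pentagonalSum_sub_one]
  ring

theorem stmt4 (n : ℕ) (hn : 1 ≤ n) (k : ℤ) :
    f n k = f (n - 1) k + T ((n : ℤ) - k) * f (n - 1) (k - 1) := by
  obtain ⟨m, rfl⟩ := Nat.exists_eq_add_of_le' hn
  rw [Nat.add_sub_cancel]
  push_cast
  exact f_succ m k
end

section
/- Define C_n = Σ_{k=0}^n q^{k²+k} [n choose k]_q. Then for all n ≥ 2, C_n − (1 + q − q^n + q^{2n}) C_{n−1} + q(1 − q^{n−1}) C_{n−2} = 0. -/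
open LaurentPolynomial

/-- `C n = Σ_{k=0}^n q^{k²+k} [n choose k]_q`. -/
noncomputable def Cpoly (n : ℕ) : LaurentPolynomial ℤ :=
  ∑ k ∈ Finset.range (n + 1), q ^ (k ^ 2 + k) * qb n k

lemma q_pow (m : ℕ) : q ^ m = T (m : ℤ) := by
  rw [q, T_pow, mul_one]

lemma qb_neg : ∀ (n : ℕ) (k : ℤ), k < 0 → qb n k = 0
  | 0, k, hk => by
    have h : k ≠ 0 := by omega
    simp [qb, h]
  | (n+1), k, hk => by
    rw [qb, qb_neg n k hk, qb_neg n (k-1) (by omega)]; ring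

lemma qb_gt : ∀ (n : ℕ) (k : ℤ), (n : ℤ) < k → qb n k = 0
  | 0, k, hk => by
    simp only [Nat.cast_zero] at hk
    have h : k ≠ 0 := by omega
    simp [qb, h]
  | (n+1), k, hk => by
    push_cast at hk
    rw [qb, qb_gt n k (by omega), qb_gt n (k-1) (by omega)]; ring

lemma qb_def (n : ℕ) (k : ℤ) : qb (n+1) k = T k * qb n k + qb n (k-1) := by rw [qb]

lemma pascal2 : ∀ (n : ℕ) (k : ℤ), qb (n+1) k = qb n k + T ((n:ℤ)+1-k) * qb n (k-1)
  | 0, k => by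
    rcases eq_or_ne k 0 with rfl | h0
    · norm_num [qb]
    · rcases eq_or_ne k 1 with rfl | h1
      · norm_num [qb]
      · have h2 : k - 1 ≠ 0 := by omega
        simp [qb, h0, h1, h2]
  | (n+1), k => by
    have key : qb (n+1+1) k = T k * qb (n+1) k + qb (n+1) (k-1) := by rw [qb]
    conv_lhs => rw [key, pascal2 n k, pascal2 n (k-1)]
    conv_rhs => rw [qb_def n k, qb_def n (k-1)]
    push_cast
    have e1 : (T (k:ℤ) * T ((n:ℤ)+1-k) : LaurentPolynomial ℤ) = T ((n:ℤ)+1) := by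
      rw [← T_add]; congr 1; ring
    have e2 : (T ((n:ℤ)+1+1-k) * T (k-1) : LaurentPolynomial ℤ) = T ((n:ℤ)+1) := by
      rw [← T_add]; congr 1; ring
    have e3 : ((n:ℤ)+1-(k-1)) = ((n:ℤ)+1+1-k) := by ring
    rw [e3]
    linear_combination (qb n (k-1)) * e1 - (qb n (k-1)) * e2

/-- `S a n = Σ q^{k²+ak} [n,k]`. -/
noncomputable def S (a n : ℕ) : LaurentPolynomial ℤ :=
  ∑ k ∈ Finset.range (n + 1), q ^ (k ^ 2 + a * k) * qb n k

lemma Cpoly_eq (n : ℕ) : Cpoly n = S 1 n := by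
  simp [Cpoly, S, one_mul]

lemma qb_top (n : ℕ) : qb n ((n+1 : ℕ) : ℤ) = 0 :=
  qb_gt n _ (by push_cast; omega)

lemma genA (a n : ℕ) : S a (n+1) = S (a+1) n + q ^ (a+1) * S (a+2) n := by
  unfold S
  have hterm : ∀ k ∈ Finset.range (n+1+1), q ^ (k ^ 2 + a * k) * qb (n+1) k
      = q ^ (k ^ 2 + (a+1) * k) * qb n k + q ^ (k ^ 2 + a * k) * qb n ((k:ℤ)-1) := by
    intro k hk
    rw [qb_def, ← q_pow k]
    ring_nf
  rw [Finset.sum_congr rfl hterm, Finset.sum_add_distrib]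
  congr 1
  · rw [Finset.sum_range_succ, qb_top n]
    simp
  · rw [Finset.sum_range_succ']
    simp only [Nat.cast_zero, zero_sub, qb_neg n (-1) (by norm_num), mul_zero, add_zero]
    rw [Finset.mul_sum]
    apply Finset.sum_congr rfl
    intro i hi
    have hc : ((i:ℕ):ℤ) + 1 - 1 = ((i:ℕ):ℤ) := by ring
    push_cast
    rw [hc]
    rw [← mul_assoc, ← pow_add]
    congr 2
    ring

lemma genB (a n : ℕ) : S a (n+1) = S a n + q ^ (n+1+a) * S (a+1) n := by
  unfold S
  have hterm : ∀ k ∈ Finset.range (n+1+1), q ^ (k ^ 2 + a * k) * qb (n+1) k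
      = q ^ (k ^ 2 + a * k) * qb n k + q ^ (k ^ 2 + a * k) * (T ((n:ℤ)+1-k) * qb n ((k:ℤ)-1)) := by
    intro k hk
    rw [pascal2]
    ring
  rw [Finset.sum_congr rfl hterm, Finset.sum_add_distrib]
  congr 1
  · rw [Finset.sum_range_succ, qb_top n]
    simp
  · rw [Finset.sum_range_succ']
    simp only [Nat.cast_zero, zero_sub, qb_neg n (-1) (by norm_num), mul_zero, add_zero]
    rw [Finset.mul_sum]
    apply Finset.sum_congr rfl
    intro i hi
    simp only [Finset.mem_range] at hi
    have hin : i ≤ n := by omega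
    obtain ⟨j, rfl⟩ : ∃ j, n = i + j := ⟨n - i, by omega⟩
    have hc : ((i+1:ℕ):ℤ) - 1 = ((i:ℕ):ℤ) := by push_cast; ring
    have harg : ((i+j:ℕ):ℤ) + 1 - ((i+1:ℕ):ℤ) = ((j:ℕ):ℤ) := by push_cast; ring
    rw [harg, ← q_pow j, hc]
    rw [show q ^ ((i+1)^2+a*(i+1)) * (q ^ j * qb (i+j) (i:ℤ))
        = q ^ ((i+1)^2+a*(i+1)+j) * qb (i+j) (i:ℤ) by rw [pow_add]; ring]
    rw [show q ^ (i+j+1+a) * (q ^ (i^2+(a+1)*i) * qb (i+j) (i:ℤ))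
        = q ^ ((i+j+1+a)+(i^2+(a+1)*i)) * qb (i+j) (i:ℤ) by rw [pow_add]; ring]
    congr 2
    ring

theorem stmt11 (n : ℕ) (hn : 2 ≤ n) :
    Cpoly n - (1 + q - q ^ n + q ^ (2 * n)) * Cpoly (n - 1)
      + q * (1 - q ^ (n - 1)) * Cpoly (n - 2) = 0 := by
  obtain ⟨m, rfl⟩ : ∃ m, n = m + 2 := ⟨n - 2, by omega⟩
  have hm1 : m + 2 - 1 = m + 1 := by omega
  have hm2 : m + 2 - 2 = m := by omega
  rw [hm1, hm2, Cpoly_eq, Cpoly_eq, Cpoly_eq]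
  have h1 : S 1 (m+1+1) = S 1 (m+1) + q ^ (m+3) * S 2 (m+1) := by
    have := genB 1 (m+1); rw [show m+1+1+1 = m+3 by ring] at this; exact this
  have h2 : S 2 (m+1) = S 2 m + q ^ (m+3) * S 3 m := by
    have := genB 2 m; rw [show m+1+2 = m+3 by ring] at this; exact this
  have h3 : S 1 (m+1) = S 2 m + q ^ 2 * S 3 m := genA 1 m
  have h4 : S 1 (m+1) = S 1 m + q ^ (m+2) * S 2 m := by
    have := genB 1 m; rw [show m+1+1 = m+2 by ring] at this; exact this
  have hs : m + 2 = m + 1 + 1 := rfl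
  rw [hs]
  linear_combination h1 + q ^ (m+3) * h2 - q ^ (2*m+4) * h3 + (q ^ (m+2) - q) * h4
end

section
/- For all n ≥ 0 and all j, Σ_{k} q^{2k²−2j²} [⌈n/2⌉ choose k+j]_q [⌊n/2⌋ choose k−j]_q = [n choose ⌊(n+1)/2⌋ − 2j]_q. -/
open LaurentPolynomial

/-- The Gaussian binomial coefficient in base `q²` (the paper's `\gaa`), i.e. the
Gaussian binomial coefficient with `q` replaced by `q²`, vanishing for `k < 0` or `k > n`. -/
noncomputable def qb2 : ℕ → ℤ → LaurentPolynomial ℤ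
  | 0, k => if k = 0 then 1 else 0
  | (n+1), k => T (2 * k) * qb2 n k + qb2 n (k-1)

lemma qb2_zero (k : ℤ) : qb2 0 k = if k = 0 then 1 else 0 := rfl
lemma qb2_succ (n : ℕ) (k : ℤ) : qb2 (n+1) k = T (2*k) * qb2 n k + qb2 n (k-1) := rfl

lemma qb2_of_neg : ∀ (n : ℕ) (k : ℤ), k < 0 → qb2 n k = 0
  | 0, k, h => by rw [qb2_zero, if_neg (by omega)]
  | (n+1), k, h => by
    rw [qb2_succ, qb2_of_neg n k h, qb2_of_neg n (k-1) (by omega)]; ring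

lemma qb2_of_gt : ∀ (n : ℕ) (k : ℤ), (n:ℤ) < k → qb2 n k = 0
  | 0, k, h => by rw [qb2_zero, if_neg (by simp at h; omega)]
  | (n+1), k, h => by
    rw [qb2_succ, qb2_of_gt n k (by push_cast at h ⊢; omega),
      qb2_of_gt n (k-1) (by push_cast at h ⊢; omega)]; ring

lemma qb2_succ' : ∀ (n : ℕ) (k : ℤ), qb2 (n+1) k = qb2 n k + T (2*((n:ℤ)+1-k)) * qb2 n (k-1)
  | 0, k => by
    rw [qb2_succ]
    rcases eq_or_ne k 0 with rfl | h0
    · norm_num [qb2_zero]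
    · rcases eq_or_ne k 1 with rfl | h1
      · norm_num [qb2_zero]
      · rw [qb2_zero, if_neg h0,
          show qb2 0 (k-1) = 0 from by rw [qb2_zero, if_neg (by omega : k - 1 ≠ 0)]]
        ring
  | (n+1), k => by
    conv_lhs => rw [qb2_succ (n+1) k, qb2_succ' n k, qb2_succ' n (k-1)]
    conv_rhs => rw [qb2_succ n k, qb2_succ n (k-1)]
    push_cast
    have hT1 : T (2*k) * T (2*((n:ℤ)+1-k))
        = (T (2*((n:ℤ)+1+1-k)) * T (2*(k-1)) : LaurentPolynomial ℤ) := by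
      rw [← T_add, ← T_add]; ring_nf
    have hT2 : T (2*((n:ℤ)+1-(k-1))) = (T (2*((n:ℤ)+1+1-k)) : LaurentPolynomial ℤ) := by
      ring_nf
    linear_combination qb2 n (k-1) * hT1 + qb2 n (k-1-1) * hT2

lemma qb2_symm : ∀ (n : ℕ) (k : ℤ), qb2 n ((n:ℤ) - k) = qb2 n k
  | 0, k => by
    rw [qb2_zero, qb2_zero]
    rcases eq_or_ne k 0 with rfl | h0
    · norm_num
    · rw [if_neg (by push_cast; omega : (0:ℕ) - k ≠ 0), if_neg h0]
  | (n+1), k => by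
    push_cast
    rw [qb2_succ n ((n:ℤ)+1-k)]
    rw [show ((n:ℤ)+1-k-1) = (n:ℤ) - k from by ring, qb2_symm n k]
    rw [show ((n:ℤ)+1-k) = (n:ℤ) - (k-1) from by ring]
    rw [qb2_symm n (k-1)]
    rw [qb2_succ' n k]
    rw [show (n:ℤ) - (k-1) = (n:ℤ)+1-k from by ring]
    ring

lemma vdm (ℓ : ℕ) : ∀ (m : ℕ) (r : ℤ),
    qb2 (m + ℓ) r
      = ∑ i ∈ Finset.Icc (0:ℤ) (m:ℤ), T (2*((m:ℤ)-i)*(r-i)) * qb2 m i * qb2 ℓ (r-i)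
  | 0, r => by
    norm_num [Finset.Icc_self, qb2_zero]
  | (m+1), r => by
    push_cast
    have hsplit : Finset.Icc (0:ℤ) ((m:ℤ)+1) = insert ((m:ℤ)+1) (Finset.Icc 0 (m:ℤ)) := by
      ext x; simp only [Finset.mem_Icc, Finset.mem_insert]; omega
    have expand : ∀ i ∈ Finset.Icc (0:ℤ) ((m:ℤ)+1),
        T (2*((m:ℤ)+1-i)*(r-i)) * qb2 (m+1) i * qb2 ℓ (r-i)
          = T (2*((m:ℤ)+1-i)*(r-i)+2*i) * qb2 m i * qb2 ℓ (r-i)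
            + T (2*((m:ℤ)+1-i)*(r-i)) * qb2 m (i-1) * qb2 ℓ (r-i) := by
      intro i _
      rw [qb2_succ, T_add]; ring
    rw [Finset.sum_congr rfl expand, Finset.sum_add_distrib]
    have h1 : (∑ i ∈ Finset.Icc (0:ℤ) ((m:ℤ)+1),
          T (2*((m:ℤ)+1-i)*(r-i)+2*i) * qb2 m i * qb2 ℓ (r-i))
        = T (2*r) * ∑ i ∈ Finset.Icc (0:ℤ) (m:ℤ),
            T (2*((m:ℤ)-i)*(r-i)) * qb2 m i * qb2 ℓ (r-i) := by
      rw [hsplit, Finset.sum_insert (by simp), qb2_of_gt m ((m:ℤ)+1) (by omega),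
        mul_zero, zero_mul, zero_add, Finset.mul_sum]
      refine Finset.sum_congr rfl fun i hi => ?_
      rw [show 2*((m:ℤ)+1-i)*(r-i)+2*i = 2*r + 2*((m:ℤ)-i)*(r-i) from by ring, T_add]
      ring
    have h2 : (∑ i ∈ Finset.Icc (0:ℤ) ((m:ℤ)+1),
          T (2*((m:ℤ)+1-i)*(r-i)) * qb2 m (i-1) * qb2 ℓ (r-i))
        = ∑ i ∈ Finset.Icc (0:ℤ) (m:ℤ),
            T (2*((m:ℤ)-i)*(r-1-i)) * qb2 m i * qb2 ℓ (r-1-i) := by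
      have hsplit0 : Finset.Icc (0:ℤ) ((m:ℤ)+1) = insert 0 (Finset.Icc 1 ((m:ℤ)+1)) := by
        ext x; simp only [Finset.mem_Icc, Finset.mem_insert]; omega
      rw [hsplit0, Finset.sum_insert (by simp),
        qb2_of_neg m ((0:ℤ)-1) (by omega), mul_zero, zero_mul, zero_add]
      refine Finset.sum_nbij' (fun i => i - 1) (fun i => i + 1) ?_ ?_ ?_ ?_ ?_
      · intro a ha; simp only [Finset.mem_Icc] at *; omega
      · intro a ha; simp only [Finset.mem_Icc] at *; omega
      · intro a _; ring
      · intro a _; ring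
      · intro a _
        rw [show 2*((m:ℤ)-(a-1))*(r-1-(a-1)) = 2*((m:ℤ)+1-a)*(r-a) from by ring,
          show r-1-(a-1) = r-a from by ring]
    rw [h1, h2, ← vdm ℓ m r, ← vdm ℓ m (r-1)]
    rw [show m+1+ℓ = (m+ℓ)+1 from by omega, qb2_succ]


theorem stmt16 (n : ℕ) (j : ℤ) :
    ∑ᶠ k : ℤ, T (2 * k ^ 2 - 2 * j ^ 2) * qb2 ((n + 1) / 2) (k + j) * qb2 (n / 2) (k - j)
      = qb2 n ((((n : ℤ) + 1) / 2) - 2 * j) := by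
  set m : ℕ := (n+1)/2 with hm
  set ℓ : ℕ := n/2 with hℓ
  have hml : m + ℓ = n := by omega
  have hr : (((n:ℤ)+1)/2) = (m:ℤ) := by omega
  rw [hr, ← hml]
  have hsupp : (Function.support fun k : ℤ =>
      T (2 * k ^ 2 - 2 * j ^ 2) * qb2 m (k + j) * qb2 ℓ (k - j))
      ⊆ ↑(Finset.Icc (-j) ((m:ℤ)-j)) := by
    intro k hk
    simp only [Function.mem_support, ne_eq] at hk
    simp only [Finset.coe_Icc, Set.mem_Icc]
    constructor
    · by_contra h
      push_neg at h
      exact hk (by rw [qb2_of_neg m (k+j) (by omega), mul_zero, zero_mul])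
    · by_contra h
      push_neg at h
      exact hk (by rw [qb2_of_gt m (k+j) (by omega), mul_zero, zero_mul])
  rw [finsum_eq_finset_sum_of_support_subset _ hsupp]
  rw [vdm ℓ m ((m:ℤ) - 2*j)]
  refine Finset.sum_nbij' (fun k => (m:ℤ) - j - k) (fun i => (m:ℤ) - j - i) ?_ ?_ ?_ ?_ ?_
  · intro a ha; simp only [Finset.mem_Icc] at *; omega
  · intro a ha; simp only [Finset.mem_Icc] at *; omega
  · intro a _; ring
  · intro a _; ring
  · intro k _
    beta_reduce
    rw [show (m:ℤ) - ((m:ℤ)-j-k) = k + j from by ring,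
      show (m:ℤ) - 2*j - ((m:ℤ)-j-k) = k - j from by ring,
      show (m:ℤ) - j - k = (m:ℤ) - (k+j) from by ring,
      qb2_symm m (k+j),
      show 2*(k+j)*(k-j) = 2*k^2 - 2*j^2 from by ring]
end
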